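/- arXiv:1610.01289 — 2 statements merged into one kernel-verified Lean document; each statement's English description precedes it below -/
import Mathlib

section
/- Let p > 1 and suppose φ : ℝ → ℝ is a C¹ positive even function satisfying −(z/2)φ'(z) − φ(z)/(p−1) + φ(z)^p = 0 for all z, with φ(0) = (p−1)^{-1/(p-1)}. Then there exists b ∈ ℝ such that φ(z) = (p − 1 + b z²)^{-1/(p-1)} for all z; and φ is bounded and nonconstant only if b > 0. -/
/-!
Substituting `u = φ ^ (-(p - 1)) - (p - 1)` linearises the profile equation into the Euler
equation `z u' = 2 u`, whose solutions on `(0, ∞)` are `u = b z²`. The normalisation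
`φ 0 = (p - 1) ^ (-1/(p-1))` says `u 0 = 0`, so evenness extends `u = b z²` to all of `ℝ`, which
is the claimed formula. Positivity of `φ ^ (-(p - 1)) = p - 1 + b z²` for every `z` forces
`b ≥ 0`, and `b = 0` gives the constant solution.
-/

open Real Set

theorem apply_eq_apply_one_mul_pow_of_hasDerivAt {f : ℝ → ℝ} {n : ℕ}
    (hf : ∀ z, 0 < z → HasDerivAt f (n * f z / z) z) {z : ℝ} (hz : 0 < z) :
    f z = f 1 * z ^ n := by
  have hquot : ∀ x ∈ Ioi (0 : ℝ), HasDerivAt (fun x => f x / x ^ n) 0 x := by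
    intro x hx
    have hx0 : x ≠ 0 := ne_of_gt hx
    refine ((hf x hx).div (hasDerivAt_pow n x) (pow_ne_zero n hx0)).congr_deriv ?_
    rcases n with _ | k
    · simp
    · field_simp
      push_cast
      ring
  have hconst := isOpen_Ioi.is_const_of_deriv_eq_zero isPreconnected_Ioi
    (fun x hx => (hquot x hx).differentiableAt.differentiableWithinAt)
    (fun x hx => (hquot x hx).deriv) hz (mem_Ioi.2 one_pos)
  simp only [one_pow, div_one] at hconst
  rw [← hconst, div_mul_cancel₀ _ (pow_ne_zero n (ne_of_gt hz))]

theorem eq_of_even_of_eqOn_Ioi {f g : ℝ → ℝ} (hf : ∀ z, f (-z) = f z) (hg : ∀ z, g (-z) = g z)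
    (h0 : f 0 = g 0) (hpos : ∀ z, 0 < z → f z = g z) : f = g := by
  funext z
  rcases lt_trichotomy z 0 with hz | rfl | hz
  · rw [← hf, ← hg, hpos _ (neg_pos.2 hz)]
  · exact h0
  · exact hpos z hz

theorem hasDerivAt_rpow_neg_sub_of_profile_ode {p z : ℝ} {φ : ℝ → ℝ} (hp : p ≠ 1)
    (hφz : 0 < φ z) (hdiff : DifferentiableAt ℝ φ z)
    (hode : -(z / 2) * deriv φ z - φ z / (p - 1) + φ z ^ p = 0) (hz : z ≠ 0) :
    HasDerivAt (fun x => φ x ^ (-(p - 1)) - (p - 1))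
      (2 * (φ z ^ (-(p - 1)) - (p - 1)) / z) z := by
  have hq : p - 1 ≠ 0 := sub_ne_zero.2 hp
  have hchain := ((hasDerivAt_rpow_const (p := -(p - 1)) (Or.inl hφz.ne')).comp z
    hdiff.hasDerivAt).sub_const (p - 1)
  refine hchain.congr_deriv ?_
  have hode' : z * deriv φ z * (p - 1) = 2 * (p - 1) * φ z ^ p - 2 * φ z := by
    field_simp at hode
    linarith
  have hpow_p : φ z ^ (-(p - 1) - 1) * φ z ^ p = 1 := by
    rw [← rpow_add hφz, show -(p - 1) - 1 + p = 0 by ring, rpow_zero]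
  have hpow_one : φ z ^ (-(p - 1) - 1) * φ z = φ z ^ (-(p - 1)) := by
    rw [← rpow_add_one hφz.ne', sub_add_cancel]
  rw [eq_div_iff hz]
  linear_combination (-(φ z ^ (-(p - 1) - 1))) * hode' - 2 * (p - 1) * hpow_p + 2 * hpow_one

theorem nonneg_of_forall_pos_add_mul_sq {a b : ℝ} (h : ∀ z, 0 < a + b * z ^ 2) : 0 ≤ b := by
  by_contra! hb
  have ha : 0 < a := by simpa using h 0
  have hb0 : b ≠ 0 := hb.ne
  have hroot : a + b * √(a / -b) ^ 2 = 0 := by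
    rw [sq_sqrt (div_nonneg ha.le (neg_nonneg.2 hb.le))]
    field_simp
    ring
  exact (h _).ne' hroot

theorem profile_ode_classification (p : ℝ) (hp : 1 < p) (φ : ℝ → ℝ)
    (hC1 : ContDiff ℝ 1 φ) (hpos : ∀ z, 0 < φ z) (heven : ∀ z, φ (-z) = φ z)
    (hode : ∀ z : ℝ, -(z/2) * deriv φ z - φ z / (p-1) + φ z ^ p = 0)
    (h0 : φ 0 = (p-1) ^ (-(1/(p-1)))) :
    ∃ b : ℝ, (∀ z : ℝ, φ z = (p - 1 + b*z^2) ^ (-(1/(p-1))))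
      ∧ ((∃ C : ℝ, ∀ z, |φ z| ≤ C) → (¬ ∃ c : ℝ, ∀ z, φ z = c) → 0 < b) := by
  have hq : 0 < p - 1 := sub_pos.2 hp
  have hinv : -(1 / (p - 1)) = (-(p - 1))⁻¹ := by rw [one_div, neg_inv]
  set u : ℝ → ℝ := fun z => φ z ^ (-(p - 1)) - (p - 1) with hu_def
  have hu0 : u 0 = 0 := by
    simp only [hu_def, h0, hinv, rpow_inv_rpow hq.le (neg_ne_zero.2 hq.ne'), sub_self]
  have hu_deriv : ∀ z, 0 < z → HasDerivAt u ((2 : ℕ) * u z / z) z := fun z hz => by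
    exact_mod_cast hasDerivAt_rpow_neg_sub_of_profile_ode hp.ne' (hpos z)
      (hC1.differentiable one_ne_zero z) (hode z) hz.ne'
  have hu : u = fun z => u 1 * z ^ 2 :=
    eq_of_even_of_eqOn_Ioi (fun z => by simp only [hu_def, heven]) (fun z => by ring)
      (by simpa using hu0) fun z hz => apply_eq_apply_one_mul_pow_of_hasDerivAt hu_deriv hz
  have hφ_pow : ∀ z, φ z ^ (-(p - 1)) = p - 1 + u 1 * z ^ 2 := fun z => by
    rw [← congrFun hu z, hu_def, add_sub_cancel]
  have hφ : ∀ z, φ z = (p - 1 + u 1 * z ^ 2) ^ (-(1 / (p - 1))) := fun z => by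
    rw [← hφ_pow, hinv, rpow_rpow_inv (hpos z).le (neg_ne_zero.2 hq.ne')]
  refine ⟨u 1, hφ, fun _ hnonconst => ?_⟩
  have hb : 0 ≤ u 1 :=
    nonneg_of_forall_pos_add_mul_sq fun z => hφ_pow z ▸ rpow_pos_of_pos (hpos z) _
  exact hb.lt_of_ne fun hb0 => hnonconst ⟨_, fun z => by rw [hφ z, ← hb0, zero_mul, add_zero]⟩
end

section
/- Let c > 0, 1 < q < 2, and suppose w : [s₀, ∞) → ℝ is C¹, negative, tends to 0 at infinity, and satisfies w'(s) = c|w(s)|^q (1 + ε(s)) where ε(s) → 0 as s → ∞. Then s^{1/(q−1)} w(s) → −[(q−1)c]^{-1/(q−1)} as s → ∞. -/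
/-!
The substitution u = |w|^(1-q) linearizes the equation: u' = (q-1) c (1 + ε) → (q-1) c.
By the mean value theorem u(s)/s has the same limit, and solving u = |w|^(1-q) for w gives
s^(1/(q-1)) |w(s)| = (u(s)/s)^(-1/(q-1)) → ((q-1) c)^(-1/(q-1)).
-/

open Filter Set Asymptotics Topology

theorem isLittleO_id_of_hasDerivAt_tendsto_zero {E : Type*} [NormedAddCommGroup E]
    [NormedSpace ℝ E] {u u' : ℝ → E} (hd : ∀ᶠ s in atTop, HasDerivAt u (u' s) s)
    (h : Tendsto u' atTop (𝓝 0)) : u =o[atTop] id := by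
  refine isLittleO_iff.2 fun δ hδ => ?_
  obtain ⟨S, hS⟩ := eventually_atTop.1 <| (eventually_ge_atTop 0).and <|
    hd.and (h.eventually (Metric.closedBall_mem_nhds 0 (half_pos hδ)))
  have hS0 : 0 ≤ S := (hS S le_rfl).1
  have hgrowth : ∀ s, S ≤ s → ‖u s - u S‖ ≤ δ / 2 * (s - S) := fun s hs =>
    norm_image_sub_le_of_norm_deriv_le_segment' (f' := u')
      (fun x hx => (hS x hx.1).2.1.hasDerivWithinAt)
      (fun x hx => mem_closedBall_zero_iff.1 (hS x hx.1).2.2) s (right_mem_Icc.2 hs)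
  filter_upwards [eventually_ge_atTop S, eventually_ge_atTop (2 * ‖u S‖ / δ)] with s hsS hsu
  rw [div_le_iff₀ hδ] at hsu
  calc ‖u s‖ ≤ ‖u s - u S‖ + ‖u S‖ := norm_le_norm_sub_add _ _
    _ ≤ δ / 2 * (s - S) + ‖u S‖ := by grw [hgrowth s hsS]
    _ ≤ δ * ‖id s‖ := by
      rw [id, Real.norm_of_nonneg (hS0.trans hsS)]
      nlinarith

theorem tendsto_div_self_of_hasDerivAt_tendsto {u u' : ℝ → ℝ} {L : ℝ}
    (hd : ∀ᶠ s in atTop, HasDerivAt u (u' s) s) (h : Tendsto u' atTop (𝓝 L)) :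
    Tendsto (fun s => u s / s) atTop (𝓝 L) := by
  have hdiff : ∀ᶠ s in atTop, HasDerivAt (fun s => u s - L * s) (u' s - L) s :=
    hd.mono fun s hs => (hs.sub ((hasDerivAt_id' s).const_mul L)).congr_deriv (by ring)
  have hlo := (isLittleO_id_of_hasDerivAt_tendsto_zero hdiff
    (by simpa using h.sub_const L)).tendsto_div_nhds_zero
  have hshift : Tendsto (fun s => (u s - L * s) / s + L) atTop (𝓝 L) := by
    simpa using hlo.add_const L
  refine hshift.congr' ?_
  filter_upwards [eventually_ne_atTop 0] with s hs
  field_simp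
  ring

theorem HasDerivAt.rpow_one_sub_of_hasDerivAt_neg_mul_rpow {v : ℝ → ℝ} {a q x : ℝ}
    (hv : 0 < v x) (hd : HasDerivAt v (-(a * v x ^ q)) x) :
    HasDerivAt (fun y => v y ^ (1 - q)) ((q - 1) * a) x := by
  refine (hd.rpow_const (Or.inl hv.ne')).congr_deriv ?_
  have hcancel : v x ^ q * v x ^ (1 - q - 1) = 1 := by
    rw [← Real.rpow_add hv]
    norm_num
  linear_combination (q - 1) * a * hcancel

theorem tendsto_rpow_mul_of_tendsto_rpow_one_sub_div {v : ℝ → ℝ} {q L : ℝ} (hq : q ≠ 1)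
    (hL : 0 < L) (hv : ∀ᶠ s in atTop, 0 < v s)
    (h : Tendsto (fun s => v s ^ (1 - q) / s) atTop (𝓝 L)) :
    Tendsto (fun s => s ^ (1 / (q - 1)) * v s) atTop (𝓝 (L ^ (-(1 / (q - 1))))) := by
  refine (h.rpow_const (Or.inl hL.ne')).congr' ?_
  filter_upwards [hv, eventually_gt_atTop 0] with s hvs hs
  have hexp : (1 - q) * -(1 / (q - 1)) = 1 := by
    field_simp [sub_ne_zero.2 hq]
    ring
  rw [Real.div_rpow (Real.rpow_nonneg hvs.le _) hs.le, ← Real.rpow_mul hvs.le, hexp,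
    Real.rpow_one, Real.rpow_neg hs.le, div_inv_eq_mul, mul_comm]

theorem ode_asymptotics_general (c q s₀ : ℝ) (hc : 0 < c) (hq1 : 1 < q)
    (w ε : ℝ → ℝ)
    (hw : ContDiffOn ℝ 1 w (Set.Ici s₀))
    (hneg : ∀ s ∈ Set.Ici s₀, w s < 0)
    (hε : Filter.Tendsto ε Filter.atTop (nhds 0))
    (hode : ∀ s ∈ Set.Ici s₀, deriv w s = c * |w s| ^ q * (1 + ε s)) :
    Filter.Tendsto (fun s => s ^ (1/(q-1)) * w s) Filter.atTop
      (nhds (-((q-1)*c) ^ (-(1/(q-1))))) := by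
  have hsubst : ∀ᶠ s in atTop,
      HasDerivAt (fun s => (-w s) ^ (1 - q)) ((q - 1) * (c * (1 + ε s))) s := by
    filter_upwards [eventually_gt_atTop s₀] with s hs
    have hw' : HasDerivAt w (deriv w s) s :=
      ((hw.differentiableOn one_ne_zero).differentiableAt (Ici_mem_nhds hs)).hasDerivAt
    refine HasDerivAt.rpow_one_sub_of_hasDerivAt_neg_mul_rpow (by linarith [hneg s hs.le])
      (hw'.neg.congr_deriv ?_)
    rw [hode s hs.le, abs_of_neg (hneg s hs.le)]
    ring
  have hrate : Tendsto (fun s => (q - 1) * (c * (1 + ε s))) atTop (𝓝 ((q - 1) * c)) := by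
    simpa using ((hε.const_add 1).const_mul c).const_mul (q - 1)
  have hpos : ∀ᶠ s in atTop, 0 < -w s :=
    (eventually_ge_atTop s₀).mono fun s hs => neg_pos.2 (hneg s hs)
  simpa only [mul_neg, neg_neg] using (tendsto_rpow_mul_of_tendsto_rpow_one_sub_div hq1.ne'
    (mul_pos (sub_pos.2 hq1) hc) hpos
    (tendsto_div_self_of_hasDerivAt_tendsto hsubst hrate)).neg

theorem ode_asymptotics (c q s₀ : ℝ) (hc : 0 < c) (hq1 : 1 < q) (hq2 : q < 2)
    (w ε : ℝ → ℝ)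
    (hw : ContDiffOn ℝ 1 w (Set.Ici s₀))
    (hneg : ∀ s ∈ Set.Ici s₀, w s < 0)
    (hlim : Filter.Tendsto w Filter.atTop (nhds 0))
    (hε : Filter.Tendsto ε Filter.atTop (nhds 0))
    (hode : ∀ s ∈ Set.Ici s₀, deriv w s = c * |w s| ^ q * (1 + ε s)) :
    Filter.Tendsto (fun s => s ^ (1/(q-1)) * w s) Filter.atTop
      (nhds (-((q-1)*c) ^ (-(1/(q-1))))) :=
  ode_asymptotics_general c q s₀ hc hq1 w ε hw hneg hε hode
end
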